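/- arXiv:2103.10058 — 4 statements merged into one kernel-verified Lean document; each statement's English description precedes it below -/
import Mathlib

section
/- Let Ṡ = ∏_{j=1}^m X_j − p_1(1 + ∑_{j=1}^m μ_j^{-1}Ẋ_j). Then E[Ṡ²] = p_1(∏_{j=1}^m (1+μ_j) − p_1(1+s_1)). -/
open MeasureTheory ProbabilityTheory Finset
open scoped NNReal

/-- The law of `m` independent Poisson random variables `X_j ~ Poisson (μ j)`,
as a product measure on `Fin m → ℕ`. -/
noncomputable def poissonPi {m : ℕ} (μ : Fin m → ℝ≥0) : Measure (Fin m → ℕ) :=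
  Measure.pi fun j => poissonMeasure (μ j)

/-!
Write `P = ∏ Xⱼ` and `Z = ∑ Xⱼ / μⱼ`. Up to an additive constant `Ṡ` is `P - p₁ Z`, and it is
centred, so `E[Ṡ²] = Var P - 2 p₁ Cov(P, Z) + p₁² Var Z`. By independence
`Var P = ∏ E[Xⱼ²] - p₁²`, `Cov(P, Xⱼ) = (∏_{k ≠ j} μₖ) Var Xⱼ` and `Var Z = ∑ Var Xⱼ / μⱼ²`;
the covariance and variance terms are both `p₁² ∑ Var Xⱼ / μⱼ²`, which leaves
`E[Ṡ²] = ∏ E[Xⱼ²] - p₁² (1 + ∑ Var Xⱼ / μⱼ²)` for any independent square-integrable factors.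
For Poisson laws the factorial moments `E[X (X - 1) ⋯ (X - k + 1)] = μᵏ` give
`E[Xⱼ²] = μⱼ (1 + μⱼ)` and `Var Xⱼ = μⱼ`.
-/

open scoped ENNReal Nat

open Real in
lemma hasSum_descFactorial_poissonMeasure (r : ℝ≥0) (k : ℕ) :
    HasSum (fun n ↦ exp (-r) * r ^ n / (n)! * (n.descFactorial k : ℝ)) (r ^ k) := by
  rw [← hasSum_nat_add_iff' k]
  have hlow : ∑ i ∈ range k, exp (-r) * r ^ i / (i)! * (i.descFactorial k : ℝ) = 0 :=
    sum_eq_zero fun i hi ↦ by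
      rw [Nat.descFactorial_eq_zero_iff_lt.2 (mem_range.1 hi), Nat.cast_zero, mul_zero]
  have hshift : ∀ n, exp (-r) * r ^ (n + k) / (n + k)! * ((n + k).descFactorial k : ℝ)
      = r ^ k * (exp (-r) * r ^ n / (n)!) := fun n ↦ by
    have hfac : ((n + k)! : ℝ) = (n)! * ((n + k).descFactorial k : ℝ) := by
      rw [← Nat.cast_mul, ← Nat.factorial_mul_descFactorial (Nat.le_add_left k n),
        Nat.add_sub_cancel]
    rw [hfac]
    field_simp
    ring
  simpa only [hlow, sub_zero, hshift, mul_one] using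
    (hasSum_one_poissonMeasure r).mul_left ((r : ℝ) ^ k)

lemma integrable_descFactorial_poissonMeasure (r : ℝ≥0) (k : ℕ) :
    Integrable (fun n : ℕ ↦ (n.descFactorial k : ℝ)) Po(r) :=
  integrable_poissonMeasure_iff.2 <| by
    simpa only [Real.norm_natCast] using (hasSum_descFactorial_poissonMeasure r k).summable

lemma integral_descFactorial_poissonMeasure (r : ℝ≥0) (k : ℕ) :
    ∫ n, (n.descFactorial k : ℝ) ∂Po(r) = r ^ k :=
  (hasSum_integral_poissonMeasure (integrable_descFactorial_poissonMeasure r k)).unique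
    (hasSum_descFactorial_poissonMeasure r k)

lemma natCast_sq_eq_descFactorial {R : Type*} [CommRing R] (n : ℕ) :
    (n : R) ^ 2 = (n.descFactorial 2 : R) + (n.descFactorial 1 : R) := by
  rw [Nat.cast_descFactorial_two, Nat.descFactorial_one]
  ring

lemma integral_natCast_poissonMeasure (r : ℝ≥0) : ∫ n, (n : ℝ) ∂Po(r) = r := by
  simpa using integral_descFactorial_poissonMeasure r 1

lemma integral_natCast_sq_poissonMeasure (r : ℝ≥0) : ∫ n, (n : ℝ) ^ 2 ∂Po(r) = r + r ^ 2 := by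
  simp_rw [natCast_sq_eq_descFactorial]
  rw [integral_add (integrable_descFactorial_poissonMeasure r 2)
    (integrable_descFactorial_poissonMeasure r 1), integral_descFactorial_poissonMeasure,
    integral_descFactorial_poissonMeasure]
  ring

lemma memLp_natCast_poissonMeasure (r : ℝ≥0) : MemLp (fun n : ℕ ↦ (n : ℝ)) 2 Po(r) := by
  refine (memLp_two_iff_integrable_sq (by fun_prop)).2 ?_
  simp_rw [natCast_sq_eq_descFactorial]
  exact (integrable_descFactorial_poissonMeasure r 2).add
    (integrable_descFactorial_poissonMeasure r 1)

lemma variance_natCast_poissonMeasure (r : ℝ≥0) : Var[fun n : ℕ ↦ (n : ℝ); Po(r)] = r := by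
  rw [variance_eq_sub (memLp_natCast_poissonMeasure r)]
  simp only [Pi.pow_apply, integral_natCast_sq_poissonMeasure, integral_natCast_poissonMeasure]
  ring

lemma inv_mul_prod_erase {ι K : Type*} [DecidableEq ι] [CommGroupWithZero K] (a : ι → K)
    {s : Finset ι} {i : ι} (hi : i ∈ s) :
    (a i)⁻¹ * ∏ j ∈ s.erase i, a j = (a i)⁻¹ ^ 2 * ∏ j ∈ s, a j := by
  rcases eq_or_ne (a i) 0 with h | h
  · simp [h]
  · rw [← mul_prod_erase s a hi, sq, mul_assoc, ← mul_assoc (a i)⁻¹ (a i), inv_mul_cancel₀ h,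
      one_mul]

section ProductSpace

variable {ι : Type*} [Fintype ι] {Ω : ι → Type*} [∀ i, MeasurableSpace (Ω i)]
  {ν : ∀ i, Measure (Ω i)}

lemma integral_mul_prod_erase_pi [DecidableEq ι] [∀ i, SigmaFinite (ν i)] (f : ∀ i, Ω i → ℝ)
    (j : ι) (g : Ω j → ℝ) :
    ∫ ω, g (ω j) * ∏ i ∈ univ.erase j, f i (ω i) ∂Measure.pi ν
      = (∫ t, g t ∂ν j) * ∏ i ∈ univ.erase j, ∫ t, f i t ∂ν i := by
  have hupdate : ∀ i ∈ univ.erase j, Function.update f j g i = f i := fun i hi ↦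
    Function.update_of_ne (ne_of_mem_erase hi) g f
  calc ∫ ω, g (ω j) * ∏ i ∈ univ.erase j, f i (ω i) ∂Measure.pi ν
      = ∫ ω, ∏ i, Function.update f j g i (ω i) ∂Measure.pi ν := by
        congr 1 with ω
        rw [← mul_prod_erase univ _ (mem_univ j), Function.update_self]
        exact congrArg _ (prod_congr rfl fun i hi ↦ by rw [hupdate i hi])
    _ = (∫ t, g t ∂ν j) * ∏ i ∈ univ.erase j, ∫ t, f i t ∂ν i := by
        rw [integral_fintype_prod_eq_prod, ← mul_prod_erase univ _ (mem_univ j),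
          Function.update_self]
        exact congrArg _ (prod_congr rfl fun i hi ↦ by rw [hupdate i hi])

variable [∀ i, IsProbabilityMeasure (ν i)] {X : ∀ i, Ω i → ℝ}

lemma memLp_comp_eval_pi {p : ℝ≥0∞} {j : ι} (hX : MemLp (X j) p (ν j)) :
    MemLp (fun ω ↦ X j (ω j)) p (Measure.pi ν) :=
  hX.comp_measurePreserving (measurePreserving_eval ν j)

lemma memLp_prod_pi (hX : ∀ i, MemLp (X i) 2 (ν i)) :
    MemLp (fun ω ↦ ∏ i, X i (ω i)) 2 (Measure.pi ν) := by
  refine (memLp_two_iff_integrable_sq (aestronglyMeasurable_fun_prod univ fun i _ ↦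
    (memLp_comp_eval_pi (hX i)).aestronglyMeasurable)).2 ?_
  simp_rw [← prod_pow]
  exact Integrable.fintype_prod_dep fun i ↦ (hX i).integrable_sq

lemma covariance_prod_eval_pi [DecidableEq ι] (hX : ∀ i, MemLp (X i) 2 (ν i)) (j : ι) :
    cov[fun ω ↦ ∏ i, X i (ω i), fun ω ↦ X j (ω j); Measure.pi ν]
      = (∏ i ∈ univ.erase j, ∫ t, X i t ∂ν i) * Var[X j; ν j] := by
  have hsplit : ∀ ω : ∀ i, Ω i,
      (∏ i, X i (ω i)) * X j (ω j) = X j (ω j) ^ 2 * ∏ i ∈ univ.erase j, X i (ω i) := fun ω ↦ by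
    rw [← mul_prod_erase univ _ (mem_univ j)]
    ring
  rw [covariance_eq_sub (memLp_prod_pi hX) (memLp_comp_eval_pi (hX j)),
    variance_eq_sub (hX j)]
  simp only [Pi.mul_apply, Pi.pow_apply, hsplit]
  rw [integral_mul_prod_erase_pi X j (fun t ↦ X j t ^ 2), integral_fintype_prod_eq_prod,
    ← mul_prod_erase univ _ (mem_univ j), integral_comp_eval (hX j).aestronglyMeasurable]
  ring

theorem integral_sq_prod_sub_linearization_pi (hX : ∀ i, MemLp (X i) 2 (ν i)) :
    ∫ ω, (∏ i, X i (ω i) - (∏ i, ∫ t, X i t ∂ν i)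
        * (1 + ∑ i, (∫ t, X i t ∂ν i)⁻¹ * (X i (ω i) - ∫ t, X i t ∂ν i))) ^ 2 ∂Measure.pi ν
      = ∏ i, ∫ t, X i t ^ 2 ∂ν i
        - (∏ i, ∫ t, X i t ∂ν i) ^ 2 * (1 + ∑ i, Var[X i; ν i] / (∫ t, X i t ∂ν i) ^ 2) := by
  classical
  set m : ι → ℝ := fun i ↦ ∫ t, X i t ∂ν i
  set p : ℝ := ∏ i, m i
  have hY : ∀ i, MemLp (fun ω : ∀ i, Ω i ↦ (m i)⁻¹ * X i (ω i)) 2 (Measure.pi ν) :=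
    fun i ↦ (memLp_comp_eval_pi (hX i)).const_mul _
  have hZ : MemLp (fun ω ↦ p * ∑ i, (m i)⁻¹ * X i (ω i)) 2 (Measure.pi ν) :=
    (memLp_finsetSum univ fun i _ ↦ hY i).const_mul p
  have hmean : ∫ ω, (∏ i, X i (ω i) - p * ∑ i, (m i)⁻¹ * X i (ω i)) ∂Measure.pi ν
      = p - p * ∑ i, (m i)⁻¹ * m i := by
    rw [integral_sub ((memLp_prod_pi hX).integrable one_le_two) (hZ.integrable one_le_two),
      integral_fintype_prod_eq_prod, integral_const_mul,
      integral_finsetSum _ fun i _ ↦ (hY i).integrable one_le_two]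
    simp only [integral_const_mul, integral_comp_eval (hX _).aestronglyMeasurable, m, p]
  have hvar_prod :
      Var[fun ω ↦ ∏ i, X i (ω i); Measure.pi ν] = ∏ i, ∫ t, X i t ^ 2 ∂ν i - p ^ 2 := by
    rw [variance_eq_sub (memLp_prod_pi hX)]
    simp only [Pi.pow_apply, ← prod_pow]
    rw [integral_fintype_prod_eq_prod (fun i t ↦ X i t ^ 2), integral_fintype_prod_eq_prod]
  have hcov : cov[fun ω ↦ ∏ i, X i (ω i), fun ω ↦ p * ∑ i, (m i)⁻¹ * X i (ω i); Measure.pi ν]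
      = p ^ 2 * ∑ i, Var[X i; ν i] / m i ^ 2 := by
    rw [covariance_const_mul_right, covariance_fun_sum_right hY (memLp_prod_pi hX), mul_sum,
      mul_sum]
    refine sum_congr rfl fun i _ ↦ ?_
    rw [covariance_const_mul_right, covariance_prod_eval_pi hX]
    calc p * ((m i)⁻¹ * ((∏ j ∈ univ.erase i, m j) * Var[X i; ν i]))
        = p * ((m i)⁻¹ * ∏ j ∈ univ.erase i, m j) * Var[X i; ν i] := by ring
      _ = p ^ 2 * (Var[X i; ν i] / m i ^ 2) := by
        rw [inv_mul_prod_erase m (mem_univ i), div_eq_mul_inv, inv_pow]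
        ring
  have hvar_lin : Var[fun ω ↦ p * ∑ i, (m i)⁻¹ * X i (ω i); Measure.pi ν]
      = p ^ 2 * ∑ i, Var[X i; ν i] / m i ^ 2 := by
    have hsum := variance_sum_pi (fun i ↦ (hX i).const_mul (m i)⁻¹)
    rw [sum_fn] at hsum
    rw [variance_const_mul, hsum]
    congr 1
    refine sum_congr rfl fun i _ ↦ ?_
    rw [variance_const_mul, div_eq_mul_inv, inv_pow, mul_comm]
  calc _ = ∫ ω, ((∏ i, X i (ω i) - p * ∑ i, (m i)⁻¹ * X i (ω i))
          - ∫ ω, (∏ i, X i (ω i) - p * ∑ i, (m i)⁻¹ * X i (ω i)) ∂Measure.pi ν) ^ 2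
          ∂Measure.pi ν := by
        congr 1 with ω
        simp only [hmean, m, mul_sub, sum_sub_distrib]
        ring
    _ = Var[fun ω ↦ ∏ i, X i (ω i) - p * ∑ i, (m i)⁻¹ * X i (ω i); Measure.pi ν] :=
        (variance_eq_integral ((memLp_prod_pi hX).sub hZ).aemeasurable).symm
    _ = _ := by
        rw [variance_fun_sub (memLp_prod_pi hX) hZ, hvar_prod, hcov, hvar_lin]
        ring

end ProductSpace

theorem expectation_Sdot_sq_general (m : ℕ) (μ : Fin m → ℝ≥0) :
    ∫ x : Fin m → ℕ, (∏ j, (x j : ℝ) - (∏ j, (μ j : ℝ)) * (1 + ∑ j, ((μ j : ℝ))⁻¹ * ((x j : ℝ) - (μ j : ℝ)))) ^ 2 ∂(poissonPi μ)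
      = (∏ j, (μ j : ℝ)) * (∏ j, (1 + (μ j : ℝ)) - (∏ j, (μ j : ℝ)) * (1 + (∑ j, ((μ j : ℝ))⁻¹))) := by
  have h := integral_sq_prod_sub_linearization_pi (ν := fun j ↦ Po(μ j)) (X := fun _ n ↦ (n : ℝ))
    fun j ↦ memLp_natCast_poissonMeasure (μ j)
  have hmoment : ∀ j, (μ j : ℝ) + (μ j : ℝ) ^ 2 = μ j * (1 + μ j) := fun j ↦ by ring
  have hdiv : ∀ j, (μ j : ℝ) / (μ j : ℝ) ^ 2 = (μ j : ℝ)⁻¹ := fun j ↦ by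
    rw [sq, div_self_mul_self']
  simp only [integral_natCast_poissonMeasure, integral_natCast_sq_poissonMeasure,
    variance_natCast_poissonMeasure, hmoment, prod_mul_distrib, hdiv] at h
  rw [poissonPi, h]
  ring

theorem expectation_Sdot_sq (m : ℕ) (hm : 2 ≤ m) (μ : Fin m → ℝ≥0) (hμ : ∀ j, 0 < μ j) :
    ∫ x : Fin m → ℕ, (∏ j, (x j : ℝ) - (∏ j, (μ j : ℝ)) * (1 + ∑ j, ((μ j : ℝ))⁻¹ * ((x j : ℝ) - (μ j : ℝ)))) ^ 2 ∂(poissonPi μ)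
      = (∏ j, (μ j : ℝ)) * (∏ j, (1 + (μ j : ℝ)) - (∏ j, (μ j : ℝ)) * (1 + (∑ j, ((μ j : ℝ))⁻¹))) :=
  expectation_Sdot_sq_general m μ
end

section
/- Let Ṡ = ∏_{j=1}^m X_j − p_1(1 + ∑_{j=1}^m μ_j^{-1}Ẋ_j) and X = ∏_{j=1}^m X_j(X_j−1) − ∏_{j=1}^m X_j². Then E[Ṡ² X] = p_1( p_1∏_{j=1}^m(4+5μ_j+μ_j²) − ∏_{j=1}^m(1+7μ_j+6μ_j²+μ_j³) ) − 2p_1²( p_1∏_{j=1}^m(2+μ_j) − ∏_{j=1}^m(1+3μ_j+μ_j²) ) − 2p_1²( p_1∑_{j=1}^m μ_j^{-1}(4+3μ_j)∏_{k≠j}(2+μ_k) − ∑_{j=1}^m μ_j^{-1}(1+6μ_j+3μ_j²)∏_{k≠j}(1+3μ_k+μ_k²) ) + p_1³( p_1 − ∏_{j=1}^m(1+μ_j) ) + 2p_1³( 2p_1 s_1 − ∑_{j=1}^m μ_j^{-1}(1+2μ_j)∏_{k≠j}(1+μ_k) ) + p_1³( p_1 s_1(4s_1+1) − ∑_{j=1}^m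 μ_j^{-2}(1+5μ_j+μ_j²)∏_{k≠j}(1+μ_k) − ∑_{j≠k} μ_j^{-1}μ_k^{-1}(1+2μ_j)(1+2μ_k)∏_{l∉{j,k}}(1+μ_l) ). -/
/-!
With `P = ∏ X_j`, `S = ∑ μ_j⁻¹ Ẋ_j` and `p₁ = ∏ μ_j` we have `Ṡ = P - p₁ (1 + S)`, so `Ṡ² X` is a
linear combination of `P² X`, `P X`, `P S X`, `X`, `S X` and `S² X`. Each `P^e X` is a difference
`∏ X_j^e X_j (X_j - 1) - ∏ X_j^(e+2)` of products of one-coordinate functions, and `S`, `S²` are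
sums over one or two coordinates; by independence every expectation factors into one-dimensional
Poisson moments of degree at most four, all obtained from the factorial moments
`E[X (X - 1) ⋯ (X - k + 1)] = μ^k`. Dividing the `j`-th factor by `μ_j²`, resp. `μ_j`, turns these
one-dimensional moments into exactly the polynomials in `μ_j` that appear in the formula.
-/

open MeasureTheory ProbabilityTheory Finset
open scoped NNReal

open scoped Nat

def HasIntegral {Ω : Type*} [MeasurableSpace Ω] (ν : Measure Ω) (f : Ω → ℝ) (v : ℝ) : Prop :=
  Integrable f ν ∧ ∫ x, f x ∂ν = v

namespace HasIntegral

variable {Ω : Type*} [MeasurableSpace Ω] {ν : Measure Ω} {f g : Ω → ℝ} {v w : ℝ}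

theorem congr (hf : HasIntegral ν f v) (hfg : ∀ x, f x = g x) (hvw : v = w) :
    HasIntegral ν g w := by
  obtain rfl : f = g := funext hfg
  exact hvw ▸ hf

theorem add (hf : HasIntegral ν f v) (hg : HasIntegral ν g w) :
    HasIntegral ν (fun x => f x + g x) (v + w) :=
  ⟨hf.1.add hg.1, by rw [integral_add hf.1 hg.1, hf.2, hg.2]⟩

theorem sub (hf : HasIntegral ν f v) (hg : HasIntegral ν g w) :
    HasIntegral ν (fun x => f x - g x) (v - w) :=
  ⟨hf.1.sub hg.1, by rw [integral_sub hf.1 hg.1, hf.2, hg.2]⟩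

theorem const_mul (hf : HasIntegral ν f v) (c : ℝ) :
    HasIntegral ν (fun x => c * f x) (c * v) :=
  ⟨hf.1.const_mul c, by rw [integral_const_mul, hf.2]⟩

theorem finset_sum {ι : Type*} (s : Finset ι) {f : ι → Ω → ℝ} {v : ι → ℝ}
    (h : ∀ i ∈ s, HasIntegral ν (f i) (v i)) :
    HasIntegral ν (fun x => ∑ i ∈ s, f i x) (∑ i ∈ s, v i) :=
  ⟨integrable_finsetSum s fun i hi => (h i hi).1, by
    rw [integral_finsetSum s fun i hi => (h i hi).1]
    exact sum_congr rfl fun i hi => (h i hi).2⟩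

end HasIntegral

theorem sq_sum_eq_sum_sq_add_sum_sum_erase {ι R : Type*} [DecidableEq ι] [CommSemiring R]
    (s : Finset ι) (a : ι → R) :
    (∑ i ∈ s, a i) ^ 2 = ∑ i ∈ s, a i ^ 2 + ∑ i ∈ s, ∑ j ∈ s.erase i, a i * a j := by
  rw [sq, sum_mul_sum, ← sum_add_distrib]
  exact sum_congr rfl fun i hi => by
    rw [sq, ← mul_sum, ← mul_sum, ← mul_add, add_sum_erase _ _ hi]

theorem prod_update_apply_of_mem {ι Ω M : Type*} [DecidableEq ι] [CommMonoid M] {s : Finset ι}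
    {j : ι} (hj : j ∈ s) (f : ι → Ω → M) (g : Ω → M) (x : ι → Ω) :
    ∏ i ∈ s, Function.update f j g i (x i) = g (x j) * ∏ i ∈ s.erase j, f i (x i) := by
  rw [← mul_prod_erase s _ hj, Function.update_self]
  exact congrArg _ <| prod_congr rfl fun i hi => by
    rw [Function.update_of_ne (ne_of_mem_erase hi)]

section Pi

variable {ι Ω : Type*} [Fintype ι] [MeasurableSpace Ω] {ν : ι → Measure Ω}
  [∀ i, SigmaFinite (ν i)] {f : ι → Ω → ℝ} {v : ι → ℝ}

theorem hasIntegral_pi_prod (h : ∀ i, HasIntegral (ν i) (f i) (v i)) :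
    HasIntegral (Measure.pi ν) (fun x => ∏ i, f i (x i)) (∏ i, v i) :=
  ⟨Integrable.fintype_prod fun i => (h i).1, by
    rw [integral_fintype_prod_eq_prod]
    exact prod_congr rfl fun i _ => (h i).2⟩

variable [DecidableEq ι]

theorem hasIntegral_pi_mul_prod_erase (j : ι) {g : Ω → ℝ} {w : ℝ} (hg : HasIntegral (ν j) g w)
    (hf : ∀ i ≠ j, HasIntegral (ν i) (f i) (v i)) :
    HasIntegral (Measure.pi ν) (fun x => g (x j) * ∏ i ∈ univ.erase j, f i (x i))
      (w * ∏ i ∈ univ.erase j, v i) := by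
  refine (hasIntegral_pi_prod (f := Function.update f j g) (v := Function.update v j w)
    fun i => ?_).congr (fun x => prod_update_apply_of_mem (mem_univ j) f g x) ?_
  · rcases eq_or_ne i j with rfl | hij
    · simpa using hg
    · simpa [hij] using hf i hij
  · rw [prod_update_of_mem (mem_univ j), sdiff_singleton_eq_erase]

theorem hasIntegral_pi_mul_mul_prod_erase_erase {j k : ι} (hkj : k ≠ j) {g h : Ω → ℝ}
    {w w' : ℝ} (hg : HasIntegral (ν j) g w) (hh : HasIntegral (ν k) h w')
    (hf : ∀ i, i ≠ j → i ≠ k → HasIntegral (ν i) (f i) (v i)) :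
    HasIntegral (Measure.pi ν)
      (fun x => g (x j) * (h (x k) * ∏ i ∈ (univ.erase j).erase k, f i (x i)))
      (w * (w' * ∏ i ∈ (univ.erase j).erase k, v i)) := by
  have hk : k ∈ univ.erase j := mem_erase.2 ⟨hkj, mem_univ k⟩
  refine (hasIntegral_pi_mul_prod_erase (f := Function.update f k h)
    (v := Function.update v k w') j hg fun i hij => ?_).congr
    (fun x => by rw [prod_update_apply_of_mem hk]) ?_
  · rcases eq_or_ne i k with rfl | hik
    · simpa using hh
    · simpa [hik] using hf i hij hik
  · rw [prod_update_of_mem hk, sdiff_singleton_eq_erase]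

variable {a : ι → Ω → ℝ} {u w : ι → ℝ}

theorem hasIntegral_pi_sum_mul_prod (hf : ∀ i, HasIntegral (ν i) (f i) (v i))
    (ha : ∀ i, HasIntegral (ν i) (fun y => a i y * f i y) (u i)) :
    HasIntegral (Measure.pi ν) (fun x => (∑ j, a j (x j)) * ∏ i, f i (x i))
      (∑ j, u j * ∏ i ∈ univ.erase j, v i) :=
  (HasIntegral.finset_sum univ fun j _ =>
      hasIntegral_pi_mul_prod_erase j (ha j) fun i _ => hf i).congr
    (fun x => by
      rw [sum_mul]
      exact sum_congr rfl fun j _ => by rw [← mul_prod_erase univ _ (mem_univ j), mul_assoc])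
    rfl

theorem hasIntegral_pi_sum_sq_mul_prod (hf : ∀ i, HasIntegral (ν i) (f i) (v i))
    (ha : ∀ i, HasIntegral (ν i) (fun y => a i y * f i y) (u i))
    (ha2 : ∀ i, HasIntegral (ν i) (fun y => a i y ^ 2 * f i y) (w i)) :
    HasIntegral (Measure.pi ν) (fun x => (∑ j, a j (x j)) ^ 2 * ∏ i, f i (x i))
      (∑ j, w j * ∏ i ∈ univ.erase j, v i +
        ∑ j, ∑ k ∈ univ.erase j, u j * (u k * ∏ i ∈ (univ.erase j).erase k, v i)) := by
  have diag := HasIntegral.finset_sum univ fun j _ =>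
    hasIntegral_pi_mul_prod_erase j (ha2 j) fun i _ => hf i
  have offDiag := HasIntegral.finset_sum univ fun j _ =>
    HasIntegral.finset_sum (univ.erase j) fun k hk =>
      hasIntegral_pi_mul_mul_prod_erase_erase (ne_of_mem_erase hk) (ha j) (ha k) fun i _ _ => hf i
  refine (diag.add offDiag).congr (fun x => ?_) rfl
  rw [sq_sum_eq_sum_sq_add_sum_sum_erase, add_mul, sum_mul, sum_mul]
  congr 1
  · exact sum_congr rfl fun j _ => by rw [← mul_prod_erase univ _ (mem_univ j), mul_assoc]
  · refine sum_congr rfl fun j _ => ?_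
    rw [sum_mul]
    refine sum_congr rfl fun k hk => ?_
    rw [← mul_prod_erase univ _ (mem_univ j), ← mul_prod_erase _ _ hk]
    ring

end Pi

theorem hasSum_poisson_descFactorial (r : ℝ≥0) (k : ℕ) :
    HasSum (fun n => Real.exp (-r) * r ^ n / n ! * (n.descFactorial k : ℝ)) ((r : ℝ) ^ k) := by
  have hshift : HasSum (fun n => Real.exp (-r) * r ^ (n + k) / (n + k)! *
      ((n + k).descFactorial k : ℝ)) ((r : ℝ) ^ k) := by
    refine (mul_one ((r : ℝ) ^ k) ▸
      (hasSum_one_poissonMeasure r).mul_left ((r : ℝ) ^ k)).congr_fun fun n => ?_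
    have hfac : ((n + k)! : ℝ) = n ! * (n + k).descFactorial k := by
      rw [Nat.add_descFactorial_eq_ascFactorial, ← Nat.cast_mul, Nat.factorial_mul_ascFactorial]
    have hn : (n ! : ℝ) ≠ 0 := by positivity
    have hd : ((n + k).descFactorial k : ℝ) ≠ 0 := by
      rw [Nat.cast_ne_zero, Ne, Nat.descFactorial_eq_zero_iff_lt]; omega
    rw [hfac, pow_add]
    field_simp
  have hlow : ∑ n ∈ range k, Real.exp (-r) * r ^ n / n ! * (n.descFactorial k : ℝ) = 0 :=
    sum_eq_zero fun n hn => by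
      rw [Nat.descFactorial_eq_zero_iff_lt.2 (mem_range.1 hn), Nat.cast_zero, mul_zero]
  have h := (hasSum_nat_add_iff
    (f := fun n => Real.exp (-r) * r ^ n / n ! * (n.descFactorial k : ℝ)) k).1 hshift
  rwa [hlow, add_zero] at h

theorem hasIntegral_poissonMeasure_of_hasSum {r : ℝ≥0} {f : ℕ → ℝ} {v : ℝ} (hf : ∀ n, 0 ≤ f n)
    (h : HasSum (fun n => Real.exp (-r) * r ^ n / n ! * f n) v) :
    HasIntegral (poissonMeasure r) f v := by
  have hint : Integrable f (poissonMeasure r) :=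
    integrable_poissonMeasure_iff.2 <| h.summable.congr fun n => by
      rw [Real.norm_of_nonneg (hf n)]
  exact ⟨hint, (hasSum_integral_poissonMeasure hint).unique h⟩

theorem hasIntegral_poissonMeasure_descFactorial (r : ℝ≥0) (k : ℕ) :
    HasIntegral (poissonMeasure r) (fun n => (n.descFactorial k : ℝ)) ((r : ℝ) ^ k) :=
  hasIntegral_poissonMeasure_of_hasSum (fun _ => by positivity) (hasSum_poisson_descFactorial r k)

theorem hasIntegral_poissonMeasure_quartic (r : ℝ≥0) (c₀ c₁ c₂ c₃ c₄ : ℝ) :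
    HasIntegral (poissonMeasure r)
      (fun n => c₀ + c₁ * n + c₂ * (n : ℝ) ^ 2 + c₃ * (n : ℝ) ^ 3 + c₄ * (n : ℝ) ^ 4)
      (c₀ + c₁ * r + c₂ * (r + r ^ 2) + c₃ * (r + 3 * r ^ 2 + r ^ 3) +
        c₄ * (r + 7 * r ^ 2 + 6 * r ^ 3 + r ^ 4)) := by
  have hd := hasIntegral_poissonMeasure_descFactorial r
  have hcast (n k : ℕ) : (n.descFactorial k : ℝ) = (descPochhammer ℝ k).eval (n : ℝ) :=
    (descPochhammer_eval_eq_descFactorial ℝ n k).symm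
  -- powers in the falling-factorial basis (Stirling numbers of the second kind)
  refine (((((hd 0).const_mul c₀).add ((hd 1).const_mul (c₁ + c₂ + c₃ + c₄))).add
    ((hd 2).const_mul (c₂ + 3 * c₃ + 7 * c₄))).add ((hd 3).const_mul (c₃ + 6 * c₄))).add
    ((hd 4).const_mul c₄) |>.congr (fun n => ?_) (by ring)
  simp only [hcast, descPochhammer_succ_eval, descPochhammer_zero, Polynomial.eval_one]
  push_cast
  ring

noncomputable def factorialTerm (r : ℝ≥0) (e n : ℕ) : ℝ :=
  ((r : ℝ) ^ 2)⁻¹ * ((n : ℝ) ^ e * (n * (n - 1)))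

noncomputable def squareTerm (r : ℝ≥0) (e n : ℕ) : ℝ := (r : ℝ)⁻¹ * ((n : ℝ) ^ e * (n : ℝ) ^ 2)

noncomputable def relDev (r : ℝ≥0) (n : ℕ) : ℝ := (r : ℝ)⁻¹ * (n - r)

section PoissonMoments

variable {r : ℝ≥0}

theorem hasIntegral_factorialTerm_zero (hr : 0 < r) :
    HasIntegral (poissonMeasure r) (factorialTerm r 0) 1 :=
  (hasIntegral_poissonMeasure_quartic r 0 (-((r : ℝ) ^ 2)⁻¹) ((r : ℝ) ^ 2)⁻¹ 0 0).congr
    (fun n => by simp only [factorialTerm]; ring) (by field_simp; ring)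

theorem hasIntegral_factorialTerm_one (hr : 0 < r) :
    HasIntegral (poissonMeasure r) (factorialTerm r 1) (2 + r) :=
  (hasIntegral_poissonMeasure_quartic r 0 0 (-((r : ℝ) ^ 2)⁻¹) ((r : ℝ) ^ 2)⁻¹ 0).congr
    (fun n => by simp only [factorialTerm]; ring) (by field_simp; ring)

theorem hasIntegral_factorialTerm_two (hr : 0 < r) :
    HasIntegral (poissonMeasure r) (factorialTerm r 2) (4 + 5 * r + r ^ 2) :=
  (hasIntegral_poissonMeasure_quartic r 0 0 0 (-((r : ℝ) ^ 2)⁻¹) ((r : ℝ) ^ 2)⁻¹).congr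
    (fun n => by simp only [factorialTerm]; ring) (by field_simp; ring)

theorem hasIntegral_squareTerm_zero (hr : 0 < r) :
    HasIntegral (poissonMeasure r) (squareTerm r 0) (1 + r) :=
  (hasIntegral_poissonMeasure_quartic r 0 0 (r : ℝ)⁻¹ 0 0).congr
    (fun n => by simp only [squareTerm]; ring) (by field_simp; ring)

theorem hasIntegral_squareTerm_one (hr : 0 < r) :
    HasIntegral (poissonMeasure r) (squareTerm r 1) (1 + 3 * r + r ^ 2) :=
  (hasIntegral_poissonMeasure_quartic r 0 0 0 (r : ℝ)⁻¹ 0).congr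
    (fun n => by simp only [squareTerm]; ring) (by field_simp; ring)

theorem hasIntegral_squareTerm_two (hr : 0 < r) :
    HasIntegral (poissonMeasure r) (squareTerm r 2) (1 + 7 * r + 6 * r ^ 2 + r ^ 3) :=
  (hasIntegral_poissonMeasure_quartic r 0 0 0 0 (r : ℝ)⁻¹).congr
    (fun n => by simp only [squareTerm]; ring) (by field_simp; ring)

theorem hasIntegral_relDev_mul_factorialTerm_zero (hr : 0 < r) :
    HasIntegral (poissonMeasure r) (fun n => relDev r n * factorialTerm r 0 n)
      (2 * (r : ℝ)⁻¹) :=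
  (hasIntegral_poissonMeasure_quartic r 0 ((r : ℝ)⁻¹ ^ 3 * r) (-(r : ℝ)⁻¹ ^ 3 * (1 + r))
    ((r : ℝ)⁻¹ ^ 3) 0).congr
    (fun n => by simp only [relDev, factorialTerm]; ring) (by field_simp; ring)

theorem hasIntegral_relDev_mul_factorialTerm_one (hr : 0 < r) :
    HasIntegral (poissonMeasure r) (fun n => relDev r n * factorialTerm r 1 n)
      ((r : ℝ)⁻¹ * (4 + 3 * r)) :=
  (hasIntegral_poissonMeasure_quartic r 0 0 ((r : ℝ)⁻¹ ^ 3 * r) (-(r : ℝ)⁻¹ ^ 3 * (1 + r))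
    ((r : ℝ)⁻¹ ^ 3)).congr
    (fun n => by simp only [relDev, factorialTerm]; ring) (by field_simp; ring)

theorem hasIntegral_relDev_mul_squareTerm_zero (hr : 0 < r) :
    HasIntegral (poissonMeasure r) (fun n => relDev r n * squareTerm r 0 n)
      ((r : ℝ)⁻¹ * (1 + 2 * r)) :=
  (hasIntegral_poissonMeasure_quartic r 0 0 (-(r : ℝ)⁻¹ ^ 2 * r) ((r : ℝ)⁻¹ ^ 2) 0).congr
    (fun n => by simp only [relDev, squareTerm]; ring) (by field_simp; ring)

theorem hasIntegral_relDev_mul_squareTerm_one (hr : 0 < r) :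
    HasIntegral (poissonMeasure r) (fun n => relDev r n * squareTerm r 1 n)
      ((r : ℝ)⁻¹ * (1 + 6 * r + 3 * r ^ 2)) :=
  (hasIntegral_poissonMeasure_quartic r 0 0 0 (-(r : ℝ)⁻¹ ^ 2 * r) ((r : ℝ)⁻¹ ^ 2)).congr
    (fun n => by simp only [relDev, squareTerm]; ring) (by field_simp; ring)

theorem hasIntegral_relDev_sq_mul_factorialTerm_zero (hr : 0 < r) :
    HasIntegral (poissonMeasure r) (fun n => relDev r n ^ 2 * factorialTerm r 0 n)
      (4 * (r : ℝ)⁻¹ ^ 2 + (r : ℝ)⁻¹) :=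
  (hasIntegral_poissonMeasure_quartic r 0 (-(r : ℝ)⁻¹ ^ 4 * r ^ 2)
    ((r : ℝ)⁻¹ ^ 4 * (2 * r + r ^ 2)) (-(r : ℝ)⁻¹ ^ 4 * (1 + 2 * r)) ((r : ℝ)⁻¹ ^ 4)).congr
    (fun n => by simp only [relDev, factorialTerm]; ring) (by field_simp; ring)

theorem hasIntegral_relDev_sq_mul_squareTerm_zero (hr : 0 < r) :
    HasIntegral (poissonMeasure r) (fun n => relDev r n ^ 2 * squareTerm r 0 n)
      ((r : ℝ)⁻¹ ^ 2 * (1 + 5 * r + r ^ 2)) :=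
  (hasIntegral_poissonMeasure_quartic r 0 0 ((r : ℝ)⁻¹ ^ 3 * r ^ 2) (-2 * (r : ℝ)⁻¹ ^ 3 * r)
    ((r : ℝ)⁻¹ ^ 3)).congr
    (fun n => by simp only [relDev, squareTerm]; ring) (by field_simp; ring)

end PoissonMoments

section PoissonPi

variable {m : ℕ} {μ : Fin m → ℝ≥0}

noncomputable def xStat (x : Fin m → ℕ) : ℝ :=
  ∏ j, ((x j : ℝ) * ((x j : ℝ) - 1)) - ∏ j, (x j : ℝ) ^ 2

theorem prod_pow_mul_xStat (hμ : ∀ j, 0 < μ j) (e : ℕ) (x : Fin m → ℕ) :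
    (∏ j, (x j : ℝ)) ^ e * xStat x =
      (∏ j, (μ j : ℝ)) ^ 2 * ∏ j, factorialTerm (μ j) e (x j) -
        (∏ j, (μ j : ℝ)) * ∏ j, squareTerm (μ j) e (x j) := by
  have hp : (∏ j, (μ j : ℝ)) ≠ 0 :=
    prod_ne_zero_iff.2 fun j _ => by have := hμ j; positivity
  simp only [xStat, factorialTerm, squareTerm, prod_mul_distrib, prod_inv_distrib, prod_pow]
  field_simp

theorem hasIntegral_prod_sq_mul_xStat (hμ : ∀ j, 0 < μ j) :
    HasIntegral (poissonPi μ) (fun x => (∏ j, (x j : ℝ)) ^ 2 * xStat x)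
      ((∏ j, (μ j : ℝ)) * ((∏ j, (μ j : ℝ)) * ∏ j, (4 + 5 * (μ j : ℝ) + (μ j : ℝ) ^ 2) -
        ∏ j, (1 + 7 * (μ j : ℝ) + 6 * (μ j : ℝ) ^ 2 + (μ j : ℝ) ^ 3))) := by
  have hA := hasIntegral_pi_prod fun i => hasIntegral_factorialTerm_two (hμ i)
  have hB := hasIntegral_pi_prod fun i => hasIntegral_squareTerm_two (hμ i)
  exact ((hA.const_mul ((∏ j, (μ j : ℝ)) ^ 2)).sub (hB.const_mul (∏ j, (μ j : ℝ)))).congr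
    (fun x => (prod_pow_mul_xStat hμ 2 x).symm) (by ring)

theorem hasIntegral_prod_mul_xStat (hμ : ∀ j, 0 < μ j) :
    HasIntegral (poissonPi μ) (fun x => (∏ j, (x j : ℝ)) * xStat x)
      ((∏ j, (μ j : ℝ)) * ((∏ j, (μ j : ℝ)) * ∏ j, (2 + (μ j : ℝ)) -
        ∏ j, (1 + 3 * (μ j : ℝ) + (μ j : ℝ) ^ 2))) := by
  have hA := hasIntegral_pi_prod fun i => hasIntegral_factorialTerm_one (hμ i)
  have hB := hasIntegral_pi_prod fun i => hasIntegral_squareTerm_one (hμ i)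
  exact ((hA.const_mul ((∏ j, (μ j : ℝ)) ^ 2)).sub (hB.const_mul (∏ j, (μ j : ℝ)))).congr
    (fun x => by simpa using (prod_pow_mul_xStat hμ 1 x).symm) (by ring)

theorem hasIntegral_xStat (hμ : ∀ j, 0 < μ j) :
    HasIntegral (poissonPi μ) xStat
      ((∏ j, (μ j : ℝ)) * ((∏ j, (μ j : ℝ)) - ∏ j, (1 + (μ j : ℝ)))) := by
  have hA := hasIntegral_pi_prod fun i => hasIntegral_factorialTerm_zero (hμ i)
  have hB := hasIntegral_pi_prod fun i => hasIntegral_squareTerm_zero (hμ i)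
  exact ((hA.const_mul ((∏ j, (μ j : ℝ)) ^ 2)).sub (hB.const_mul (∏ j, (μ j : ℝ)))).congr
    (fun x => by simpa using (prod_pow_mul_xStat hμ 0 x).symm)
    (by simp only [prod_const_one]; ring)

theorem hasIntegral_prod_mul_sum_relDev_mul_xStat (hμ : ∀ j, 0 < μ j) :
    HasIntegral (poissonPi μ)
      (fun x => (∏ j, (x j : ℝ)) * (∑ j, relDev (μ j) (x j)) * xStat x)
      ((∏ j, (μ j : ℝ)) * ((∏ j, (μ j : ℝ)) *
        ∑ j, ((μ j : ℝ))⁻¹ * (4 + 3 * (μ j : ℝ)) * ∏ k ∈ univ.erase j, (2 + (μ k : ℝ)) -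
        ∑ j, ((μ j : ℝ))⁻¹ * (1 + 6 * (μ j : ℝ) + 3 * (μ j : ℝ) ^ 2) *
          ∏ k ∈ univ.erase j, (1 + 3 * (μ k : ℝ) + (μ k : ℝ) ^ 2))) := by
  have hA := hasIntegral_pi_sum_mul_prod (fun i => hasIntegral_factorialTerm_one (hμ i))
    fun i => hasIntegral_relDev_mul_factorialTerm_one (hμ i)
  have hB := hasIntegral_pi_sum_mul_prod (fun i => hasIntegral_squareTerm_one (hμ i))
    fun i => hasIntegral_relDev_mul_squareTerm_one (hμ i)
  exact ((hA.const_mul ((∏ j, (μ j : ℝ)) ^ 2)).sub (hB.const_mul (∏ j, (μ j : ℝ)))).congr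
    (fun x => by linear_combination -(∑ j, relDev (μ j) (x j)) * prod_pow_mul_xStat hμ 1 x)
    (by ring)

theorem hasIntegral_sum_relDev_mul_xStat (hμ : ∀ j, 0 < μ j) :
    HasIntegral (poissonPi μ) (fun x => (∑ j, relDev (μ j) (x j)) * xStat x)
      ((∏ j, (μ j : ℝ)) * (2 * (∏ j, (μ j : ℝ)) * (∑ j, ((μ j : ℝ))⁻¹) -
        ∑ j, ((μ j : ℝ))⁻¹ * (1 + 2 * (μ j : ℝ)) * ∏ k ∈ univ.erase j, (1 + (μ k : ℝ)))) := by
  have hA := hasIntegral_pi_sum_mul_prod (fun i => hasIntegral_factorialTerm_zero (hμ i))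
    fun i => hasIntegral_relDev_mul_factorialTerm_zero (hμ i)
  have hB := hasIntegral_pi_sum_mul_prod (fun i => hasIntegral_squareTerm_zero (hμ i))
    fun i => hasIntegral_relDev_mul_squareTerm_zero (hμ i)
  exact ((hA.const_mul ((∏ j, (μ j : ℝ)) ^ 2)).sub (hB.const_mul (∏ j, (μ j : ℝ)))).congr
    (fun x => by linear_combination -(∑ j, relDev (μ j) (x j)) * prod_pow_mul_xStat hμ 0 x)
    (by simp only [prod_const_one, mul_one, ← mul_sum]; ring)

theorem hasIntegral_sum_relDev_sq_mul_xStat (hμ : ∀ j, 0 < μ j) :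
    HasIntegral (poissonPi μ) (fun x => (∑ j, relDev (μ j) (x j)) ^ 2 * xStat x)
      ((∏ j, (μ j : ℝ)) *
        ((∏ j, (μ j : ℝ)) * (∑ j, ((μ j : ℝ))⁻¹) * (4 * (∑ j, ((μ j : ℝ))⁻¹) + 1) -
          ∑ j, ((μ j : ℝ))⁻¹ ^ 2 * (1 + 5 * (μ j : ℝ) + (μ j : ℝ) ^ 2) *
            ∏ k ∈ univ.erase j, (1 + (μ k : ℝ)) -
          ∑ j, ∑ k ∈ univ.erase j, ((μ j : ℝ))⁻¹ * ((μ k : ℝ))⁻¹ * (1 + 2 * (μ j : ℝ)) *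
            (1 + 2 * (μ k : ℝ)) * ∏ l ∈ (univ.erase j).erase k, (1 + (μ l : ℝ)))) := by
  have hA := hasIntegral_pi_sum_sq_mul_prod (fun i => hasIntegral_factorialTerm_zero (hμ i))
    (fun i => hasIntegral_relDev_mul_factorialTerm_zero (hμ i))
    fun i => hasIntegral_relDev_sq_mul_factorialTerm_zero (hμ i)
  have hB := hasIntegral_pi_sum_sq_mul_prod (fun i => hasIntegral_squareTerm_zero (hμ i))
    (fun i => hasIntegral_relDev_mul_squareTerm_zero (hμ i))
    fun i => hasIntegral_relDev_sq_mul_squareTerm_zero (hμ i)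
  refine ((hA.const_mul ((∏ j, (μ j : ℝ)) ^ 2)).sub (hB.const_mul (∏ j, (μ j : ℝ)))).congr
    (fun x => by linear_combination -(∑ j, relDev (μ j) (x j)) ^ 2 * prod_pow_mul_xStat hμ 0 x) ?_
  have hoff : ∑ j, ∑ k ∈ univ.erase j, 2 * ((μ j : ℝ))⁻¹ * (2 * ((μ k : ℝ))⁻¹) =
      4 * ∑ j, ∑ k ∈ univ.erase j, ((μ j : ℝ))⁻¹ * ((μ k : ℝ))⁻¹ := by
    simp only [mul_sum]; ring_nf
  simp only [prod_const_one, mul_one]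
  rw [hoff, sum_add_distrib, ← mul_sum]
  linear_combination (norm := ring_nf) (-4 * (∏ j, (μ j : ℝ)) ^ 2) *
    sq_sum_eq_sum_sq_add_sum_sum_erase univ fun j => ((μ j : ℝ))⁻¹

end PoissonPi

theorem expectation_Sdot_sq_X_general (m : ℕ) (μ : Fin m → ℝ≥0) (hμ : ∀ j, 0 < μ j) :
    ∫ x : Fin m → ℕ, (∏ j, (x j : ℝ) - (∏ j, (μ j : ℝ)) * (1 + ∑ j, ((μ j : ℝ))⁻¹ * ((x j : ℝ) - (μ j : ℝ)))) ^ 2 * (∏ j, ((x j : ℝ) * ((x j : ℝ) - 1)) - ∏ j, (x j : ℝ) ^ 2) ∂(poissonPi μ)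
      = (∏ j, (μ j : ℝ)) * ((∏ j, (μ j : ℝ)) * ∏ j, (4 + 5 * (μ j : ℝ) + (μ j : ℝ) ^ 2) - ∏ j, (1 + 7 * (μ j : ℝ) + 6 * (μ j : ℝ) ^ 2 + (μ j : ℝ) ^ 3)) - 2 * (∏ j, (μ j : ℝ)) ^ 2 * ((∏ j, (μ j : ℝ)) * ∏ j, (2 + (μ j : ℝ)) - ∏ j, (1 + 3 * (μ j : ℝ) + (μ j : ℝ) ^ 2)) - 2 * (∏ j, (μ j : ℝ)) ^ 2 * ((∏ j, (μ j : ℝ)) * ∑ j, ((μ j : ℝ))⁻¹ * (4 + 3 * (μ j : ℝ)) * ∏ k ∈ univ.erase j, (2 + (μ k : ℝ)) - ∑ j, ((μ j : ℝ))⁻¹ * (1 + 6 * (μ j : ℝ) + 3 * (μ j : ℝ) ^ 2) * ∏ k ∈ univ.erase j, (1 + 3 * (μ k : ℝ) + (μ k : ℝ) ^ 2)) + (∏ j, (μ j : ℝ)) ^ 3 * ((∏ j, (μ j : ℝ)) - ∏ j, (1 + (μ j : ℝ))) + 2 * (∏ j, (μ j : ℝ)) ^ 3 * (2 * (∏ j,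 (μ j : ℝ)) * (∑ j, ((μ j : ℝ))⁻¹) - ∑ j, ((μ j : ℝ))⁻¹ * (1 + 2 * (μ j : ℝ)) * ∏ k ∈ univ.erase j, (1 + (μ k : ℝ))) + (∏ j, (μ j : ℝ)) ^ 3 * ((∏ j, (μ j : ℝ)) * (∑ j, ((μ j : ℝ))⁻¹) * (4 * (∑ j, ((μ j : ℝ))⁻¹) + 1) - ∑ j, ((μ j : ℝ))⁻¹ ^ 2 * (1 + 5 * (μ j : ℝ) + (μ j : ℝ) ^ 2) * ∏ k ∈ univ.erase j, (1 + (μ k : ℝ)) - ∑ j, ∑ k ∈ univ.erase j, ((μ j : ℝ))⁻¹ * ((μ k : ℝ))⁻¹ * (1 + 2 * (μ j : ℝ)) * (1 + 2 * (μ k : ℝ)) * ∏ l ∈ (univ.erase j).erase k, (1 + (μ l : ℝ))) := by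
  have h := ((((((hasIntegral_prod_sq_mul_xStat hμ).sub
    ((hasIntegral_prod_mul_xStat hμ).const_mul (2 * ∏ j, (μ j : ℝ)))).sub
    ((hasIntegral_prod_mul_sum_relDev_mul_xStat hμ).const_mul (2 * ∏ j, (μ j : ℝ)))).add
    ((hasIntegral_xStat hμ).const_mul ((∏ j, (μ j : ℝ)) ^ 2))).add
    ((hasIntegral_sum_relDev_mul_xStat hμ).const_mul (2 * (∏ j, (μ j : ℝ)) ^ 2))).add
    ((hasIntegral_sum_relDev_sq_mul_xStat hμ).const_mul ((∏ j, (μ j : ℝ)) ^ 2)))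
  refine (h.congr (fun x => ?_) (by ring)).2
  simp only [xStat, relDev]
  ring

theorem expectation_Sdot_sq_X (m : ℕ) (hm : 2 ≤ m) (μ : Fin m → ℝ≥0) (hμ : ∀ j, 0 < μ j) :
    ∫ x : Fin m → ℕ, (∏ j, (x j : ℝ) - (∏ j, (μ j : ℝ)) * (1 + ∑ j, ((μ j : ℝ))⁻¹ * ((x j : ℝ) - (μ j : ℝ)))) ^ 2 * (∏ j, ((x j : ℝ) * ((x j : ℝ) - 1)) - ∏ j, (x j : ℝ) ^ 2) ∂(poissonPi μ)
      = (∏ j, (μ j : ℝ)) * ((∏ j, (μ j : ℝ)) * ∏ j, (4 + 5 * (μ j : ℝ) + (μ j : ℝ) ^ 2) - ∏ j, (1 + 7 * (μ j : ℝ) + 6 * (μ j : ℝ) ^ 2 + (μ j : ℝ) ^ 3)) - 2 * (∏ j, (μ j : ℝ)) ^ 2 * ((∏ j, (μ j : ℝ)) * ∏ j, (2 + (μ j : ℝ)) - ∏ j, (1 + 3 * (μ j : ℝ) + (μ j : ℝ) ^ 2)) - 2 * (∏ j, (μ j : ℝ)) ^ 2 * ((∏ j, (μ j : ℝ)) * ∑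 j, ((μ j : ℝ))⁻¹ * (4 + 3 * (μ j : ℝ)) * ∏ k ∈ univ.erase j, (2 + (μ k : ℝ)) - ∑ j, ((μ j : ℝ))⁻¹ * (1 + 6 * (μ j : ℝ) + 3 * (μ j : ℝ) ^ 2) * ∏ k ∈ univ.erase j, (1 + 3 * (μ k : ℝ) + (μ k : ℝ) ^ 2)) + (∏ j, (μ j : ℝ)) ^ 3 * ((∏ j, (μ j : ℝ)) - ∏ j, (1 + (μ j : ℝ))) + 2 * (∏ j, (μ j : ℝ)) ^ 3 * (2 * (∏ j, (μ j : ℝ)) * (∑ j, ((μ j : ℝ))⁻¹) - ∑ j, ((μ j : ℝ))⁻¹ * (1 + 2 * (μ j : ℝ)) * ∏ k ∈ univ.erase j, (1 + (μ k : ℝ))) + (∏ j, (μ j : ℝ)) ^ 3 * ((∏ j, (μ j : ℝ)) * (∑ j, ((μ j : ℝ))⁻¹) * (4 * (∑ j, ((μ j : ℝ))⁻¹) + 1) - ∑ j, ((μ j : ℝ))⁻¹ ^ 2 * (1 + 5 * (μ j : ℝ) + (μ j : ℝ) ^ 2) * ∏ k ∈ univ.erase j, (1 + (μ k : ℝ))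 - ∑ j, ∑ k ∈ univ.erase j, ((μ j : ℝ))⁻¹ * ((μ k : ℝ))⁻¹ * (1 + 2 * (μ j : ℝ)) * (1 + 2 * (μ k : ℝ)) * ∏ l ∈ (univ.erase j).erase k, (1 + (μ l : ℝ))) :=
  expectation_Sdot_sq_X_general m μ hμ
end

section
/- Let V = p_1 ∑_{j=1}^m μ_j^{-1}Ẋ_j and X = ∏_{j=1}^m X_j(X_j−1) − ∏_{j=1}^m X_j². Then E[V X] = p_1²( 2p_1 s_1 − ∑_{j=1}^m μ_j^{-1}(1+2μ_j)∏_{k≠j}(1+μ_k) ). -/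
open MeasureTheory ProbabilityTheory Finset
open scoped NNReal

/-!
Expanding `V`, `E[V X] = p₁ ∑ⱼ μⱼ⁻¹ E[Ẋⱼ X]`, and `Ẋⱼ X` is a difference of two products of
functions of single coordinates. By independence each product integrates to
`E[(Xⱼ - μⱼ) f(Xⱼ)] ∏_{k ≠ j} E[f(Xₖ)]`, and the one-dimensional moments all follow from
the factorial moments `E[Xₖ(Xₖ - 1)⋯(Xₖ - i + 1)] = μₖ ^ i` of the Poisson law.
-/

theorem Finset.prod_univ_apply_update {ι : Type*} [Fintype ι] [DecidableEq ι]
    {β : ι → Type*} {M : Type*} [CommMonoid M] (φ : ∀ i, β i → M) (f : ∀ i, β i) (j : ι)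
    (b : β j) :
    ∏ i, φ i (Function.update f j b i) = φ j b * ∏ i ∈ univ.erase j, φ i (f i) := by
  simp only [Function.apply_update φ, prod_update_of_mem (mem_univ j),
    sdiff_singleton_eq_erase]

theorem Finset.mul_prod_eq_prod_update {ι : Type*} [Fintype ι] [DecidableEq ι] {E : ι → Type*}
    (f : ∀ i, E i → ℝ) (j : ι) (g : E j → ℝ) (x : ∀ i, E i) :
    g (x j) * ∏ i, f i (x i) = ∏ i, Function.update f j (fun y ↦ g y * f j y) i (x i) := by
  rw [prod_univ_apply_update (fun i (u : E i → ℝ) ↦ u (x i)),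
    ← mul_prod_erase univ _ (mem_univ j), mul_assoc]

namespace MeasureTheory

variable {ι : Type*} [Fintype ι] [DecidableEq ι] {E : ι → Type*} [∀ i, MeasurableSpace (E i)]
  {ν : ∀ i, Measure (E i)} [∀ i, SigmaFinite (ν i)]

theorem integral_mul_prod_pi (f : ∀ i, E i → ℝ) (j : ι) (g : E j → ℝ) :
    ∫ x, g (x j) * ∏ i, f i (x i) ∂Measure.pi ν
      = (∫ y, g y * f j y ∂ν j) * ∏ i ∈ univ.erase j, ∫ y, f i y ∂ν i := by
  simp_rw [mul_prod_eq_prod_update f j g, integral_fintype_prod_eq_prod]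
  exact prod_univ_apply_update (fun i (u : E i → ℝ) ↦ ∫ y, u y ∂ν i) f j _

theorem Integrable.mul_prod_pi {j : ι} {f : ∀ i, E i → ℝ}
    (hf : ∀ i ≠ j, Integrable (f i) (ν i)) {g : E j → ℝ}
    (hg : Integrable (fun y ↦ g y * f j y) (ν j)) :
    Integrable (fun x ↦ g (x j) * ∏ i, f i (x i)) (Measure.pi ν) := by
  simp_rw [mul_prod_eq_prod_update f j g]
  refine .fintype_prod_dep fun i ↦ ?_
  rcases eq_or_ne i j with rfl | hij
  · simpa using hg
  · simpa [hij] using hf i hij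

end MeasureTheory

namespace ProbabilityTheory

open Nat Polynomial

variable (r : ℝ≥0)

theorem hasSum_descFactorial_poissonMeasure (k : ℕ) :
    HasSum (fun n : ℕ ↦ Real.exp (-r) * r ^ n / n ! * (n.descFactorial k : ℝ)) (r ^ k) := by
  rw [← (add_left_injective k).hasSum_iff fun n hn ↦ ?_]
  · have hshift (j : ℕ) :
        Real.exp (-r) * r ^ (j + k) / (j + k) ! * ((j + k).descFactorial k : ℝ)
          = r ^ k * (Real.exp (-r) * r ^ j / j !) := by
      have hfac : ((j + k) ! : ℝ) = j ! * (j + k).descFactorial k := by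
        exact_mod_cast (Nat.add_sub_cancel j k ▸
          Nat.factorial_mul_descFactorial (Nat.le_add_left k j)).symm
      rw [hfac, pow_add]
      field_simp
    simpa [Function.comp_def, hshift] using (hasSum_one_poissonMeasure r).mul_left ((r : ℝ) ^ k)
  · have hnk : n < k := by
      by_contra h
      exact hn ⟨n - k, Nat.sub_add_cancel (not_lt.1 h)⟩
    simp [Nat.descFactorial_eq_zero_iff_lt.2 hnk]

theorem integrable_descFactorial_poissonMeasure (k : ℕ) :
    Integrable (fun n : ℕ ↦ (n.descFactorial k : ℝ)) (poissonMeasure r) :=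
  integrable_poissonMeasure_iff.2 <| by
    simpa using (hasSum_descFactorial_poissonMeasure r k).summable

theorem integral_descFactorial_poissonMeasure (k : ℕ) :
    ∫ n, (n.descFactorial k : ℝ) ∂poissonMeasure r = r ^ k := by
  simpa using (hasSum_integral_poissonMeasure
    (integrable_descFactorial_poissonMeasure r k)).unique (hasSum_descFactorial_poissonMeasure r k)

theorem integrable_exp_poissonMeasure : Integrable (fun n : ℕ ↦ Real.exp n) (poissonMeasure r) :=
  integrable_poissonMeasure_iff.2 <| by
    refine ((Real.summable_pow_div_factorial (r * Real.exp 1)).mul_left (Real.exp (-r))).congr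
      fun n ↦ ?_
    rw [Real.norm_eq_abs, Real.abs_exp, ← Real.exp_one_pow, mul_pow]
    ring

theorem integrable_pow_poissonMeasure (k : ℕ) :
    Integrable (fun n : ℕ ↦ (n : ℝ) ^ k) (poissonMeasure r) := by
  refine ((integrable_exp_poissonMeasure r).const_mul (k ! : ℝ)).mono' .of_discrete
    (ae_of_all _ fun n ↦ ?_)
  have := Real.pow_div_factorial_le_exp (n : ℝ) n.cast_nonneg k
  rw [div_le_iff₀ (by positivity)] at this
  simpa [mul_comm] using this

theorem integrable_eval_poissonMeasure (p : ℝ[X]) :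
    Integrable (fun n : ℕ ↦ p.eval (n : ℝ)) (poissonMeasure r) := by
  induction p using Polynomial.induction_on' with
  | add p q hp hq => simp only [eval_add]; exact hp.add hq
  | monomial k a => simpa using (integrable_pow_poissonMeasure r k).const_mul a

theorem integral_mul_sub_one_poissonMeasure :
    ∫ n, (n : ℝ) * (n - 1) ∂poissonMeasure r = r ^ 2 := by
  simp_rw [← cast_descFactorial_two]
  exact integral_descFactorial_poissonMeasure r 2

theorem integral_sq_poissonMeasure :
    ∫ n, (n : ℝ) ^ 2 ∂poissonMeasure r = r + r ^ 2 := by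
  calc ∫ n, (n : ℝ) ^ 2 ∂poissonMeasure r
      = ∫ n, ((n.descFactorial 1 : ℝ) + n.descFactorial 2) ∂poissonMeasure r :=
        integral_congr_ae <| ae_of_all _ fun n ↦ by
          dsimp only
          rw [descFactorial_one, cast_descFactorial_two]
          ring
    _ = r + r ^ 2 := by
      rw [integral_add (integrable_descFactorial_poissonMeasure r 1)
        (integrable_descFactorial_poissonMeasure r 2), integral_descFactorial_poissonMeasure,
        integral_descFactorial_poissonMeasure, pow_one]

theorem integral_sub_mul_mul_sub_one_poissonMeasure :
    ∫ n, ((n : ℝ) - r) * (n * (n - 1)) ∂poissonMeasure r = 2 * r ^ 2 := by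
  calc ∫ n, ((n : ℝ) - r) * (n * (n - 1)) ∂poissonMeasure r
      = ∫ n, ((n.descFactorial 3 : ℝ) + (2 - r) * n.descFactorial 2) ∂poissonMeasure r :=
        integral_congr_ae <| ae_of_all _ fun n ↦ by
          dsimp only
          rw [← descPochhammer_eval_eq_descFactorial, ← descPochhammer_eval_eq_descFactorial]
          simp [descPochhammer_succ_right]
          ring
    _ = 2 * r ^ 2 := by
      rw [integral_add (integrable_descFactorial_poissonMeasure r 3)
        ((integrable_descFactorial_poissonMeasure r 2).const_mul _), integral_const_mul,
        integral_descFactorial_poissonMeasure, integral_descFactorial_poissonMeasure]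
      ring

theorem integral_sub_mul_sq_poissonMeasure :
    ∫ n, ((n : ℝ) - r) * n ^ 2 ∂poissonMeasure r = 2 * r ^ 2 + r := by
  have h3 := integrable_descFactorial_poissonMeasure r 3
  have h2 := (integrable_descFactorial_poissonMeasure r 2).const_mul (3 - r : ℝ)
  have h1 := (integrable_descFactorial_poissonMeasure r 1).const_mul (1 - r : ℝ)
  calc ∫ n, ((n : ℝ) - r) * n ^ 2 ∂poissonMeasure r
      = ∫ n, ((n.descFactorial 3 : ℝ) + (3 - r) * n.descFactorial 2
          + (1 - r) * n.descFactorial 1) ∂poissonMeasure r :=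
        integral_congr_ae <| ae_of_all _ fun n ↦ by
          dsimp only
          rw [← descPochhammer_eval_eq_descFactorial, ← descPochhammer_eval_eq_descFactorial,
            ← descPochhammer_eval_eq_descFactorial]
          simp [descPochhammer_succ_right]
          ring
    _ = 2 * r ^ 2 + r := by
      rw [integral_add (by exact h3.add h2) h1, integral_add h3 h2,
        integral_const_mul, integral_const_mul, integral_descFactorial_poissonMeasure,
        integral_descFactorial_poissonMeasure, integral_descFactorial_poissonMeasure]
      ring

variable {m : ℕ} (μ : Fin m → ℝ≥0) (j : Fin m)

theorem integrable_sub_mul_prod_eval_poissonPi (p : ℝ[X]) :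
    Integrable (fun x ↦ ((x j : ℝ) - μ j) * ∏ k, p.eval (x k : ℝ)) (poissonPi μ) :=
  Integrable.mul_prod_pi (g := fun n : ℕ ↦ (n : ℝ) - μ j)
    (fun k _ ↦ integrable_eval_poissonMeasure (μ k) p) <| by
    simpa using (integrable_eval_poissonMeasure (μ j) ((X - C (μ j : ℝ)) * p) :)

theorem integrable_sub_mul_prod_mul_sub_one_poissonPi :
    Integrable (fun x ↦ ((x j : ℝ) - μ j) * ∏ k, ((x k : ℝ) * ((x k : ℝ) - 1)))
      (poissonPi μ) := by
  simpa using (integrable_sub_mul_prod_eval_poissonPi μ j (X * (X - 1)) :)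

theorem integrable_sub_mul_prod_sq_poissonPi :
    Integrable (fun x ↦ ((x j : ℝ) - μ j) * ∏ k, (x k : ℝ) ^ 2) (poissonPi μ) := by
  simpa using (integrable_sub_mul_prod_eval_poissonPi μ j (X ^ 2) :)

theorem integral_sub_mul_prod_sub_sub_mul_prod_poissonPi :
    ∫ x, (((x j : ℝ) - μ j) * ∏ k, ((x k : ℝ) * ((x k : ℝ) - 1))
        - ((x j : ℝ) - μ j) * ∏ k, (x k : ℝ) ^ 2) ∂poissonPi μ
      = 2 * (μ j : ℝ) ^ 2 * ∏ k ∈ univ.erase j, (μ k : ℝ) ^ 2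
        - (2 * (μ j : ℝ) ^ 2 + μ j) * ∏ k ∈ univ.erase j, ((μ k : ℝ) + (μ k : ℝ) ^ 2) := by
  rw [integral_sub (integrable_sub_mul_prod_mul_sub_one_poissonPi μ j)
      (integrable_sub_mul_prod_sq_poissonPi μ j), poissonPi,
    integral_mul_prod_pi (fun _ (n : ℕ) ↦ (n : ℝ) * (n - 1)) j (fun n ↦ (n : ℝ) - μ j),
    integral_mul_prod_pi (fun _ (n : ℕ) ↦ (n : ℝ) ^ 2) j (fun n ↦ (n : ℝ) - μ j)]
  simp only [integral_sub_mul_mul_sub_one_poissonMeasure, integral_sub_mul_sq_poissonMeasure,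
    integral_mul_sub_one_poissonMeasure, integral_sq_poissonMeasure]

end ProbabilityTheory

theorem prod_mul_inv_mul_sub_eq {ι : Type*} [Fintype ι] [DecidableEq ι] (μ : ι → ℝ) (j : ι) :
    (∏ i, μ i) * (μ j)⁻¹ * (2 * μ j ^ 2 * ∏ k ∈ univ.erase j, μ k ^ 2
        - (2 * μ j ^ 2 + μ j) * ∏ k ∈ univ.erase j, (μ k + μ k ^ 2))
      = (∏ i, μ i) ^ 2 * (2 * (∏ i, μ i) * (μ j)⁻¹)
        - (∏ i, μ i) ^ 2 * ((μ j)⁻¹ * (1 + 2 * μ j) * ∏ k ∈ univ.erase j, (1 + μ k)) := by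
  have hsplit : ∏ k ∈ univ.erase j, (μ k + μ k ^ 2)
      = (∏ k ∈ univ.erase j, μ k) * ∏ k ∈ univ.erase j, (1 + μ k) := by
    rw [← prod_mul_distrib]
    exact prod_congr rfl fun k _ ↦ by ring
  rw [← mul_prod_erase univ μ (mem_univ j), prod_pow, hsplit]
  rcases eq_or_ne (μ j) 0 with h | h
  · simp [h]
  · field_simp
    ring

theorem expectation_V_X_general (m : ℕ) (μ : Fin m → ℝ≥0) :
    ∫ x : Fin m → ℕ, ((∏ j, (μ j : ℝ)) * ∑ j, ((μ j : ℝ))⁻¹ * ((x j : ℝ) - (μ j : ℝ))) * (∏ j, ((x j : ℝ) * ((x j : ℝ) - 1)) - ∏ j, (x j : ℝ) ^ 2) ∂(poissonPi μ)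
      = (∏ j, (μ j : ℝ)) ^ 2 * (2 * (∏ j, (μ j : ℝ)) * (∑ j, ((μ j : ℝ))⁻¹) - ∑ j, ((μ j : ℝ))⁻¹ * (1 + 2 * (μ j : ℝ)) * ∏ k ∈ univ.erase j, (1 + (μ k : ℝ))) := by
  set P : ℝ := ∏ j, (μ j : ℝ)
  calc _ = ∫ x, ∑ j, P * (μ j : ℝ)⁻¹ *
          (((x j : ℝ) - μ j) * ∏ k, ((x k : ℝ) * ((x k : ℝ) - 1))
            - ((x j : ℝ) - μ j) * ∏ k, (x k : ℝ) ^ 2) ∂poissonPi μ :=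
        integral_congr_ae <| ae_of_all _ fun x ↦ by
          rw [mul_sum, sum_mul]
          exact sum_congr rfl fun j _ ↦ by ring
    _ = ∑ j, P * (μ j : ℝ)⁻¹ * (2 * (μ j : ℝ) ^ 2 * ∏ k ∈ univ.erase j, (μ k : ℝ) ^ 2
        - (2 * (μ j : ℝ) ^ 2 + μ j) * ∏ k ∈ univ.erase j, ((μ k : ℝ) + (μ k : ℝ) ^ 2)) := by
      rw [integral_finsetSum _ fun j _ ↦ by
        exact ((integrable_sub_mul_prod_mul_sub_one_poissonPi μ j).sub
          (integrable_sub_mul_prod_sq_poissonPi μ j)).const_mul _]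
      simp_rw [integral_const_mul, integral_sub_mul_prod_sub_sub_mul_prod_poissonPi]
    _ = _ := by
      rw [mul_sub, mul_sum, mul_sum, mul_sum, ← sum_sub_distrib]
      exact sum_congr rfl fun j _ ↦ prod_mul_inv_mul_sub_eq (fun k ↦ (μ k : ℝ)) j

theorem expectation_V_X (m : ℕ) (hm : 2 ≤ m) (μ : Fin m → ℝ≥0) (hμ : ∀ j, 0 < μ j) :
    ∫ x : Fin m → ℕ, ((∏ j, (μ j : ℝ)) * ∑ j, ((μ j : ℝ))⁻¹ * ((x j : ℝ) - (μ j : ℝ))) * (∏ j, ((x j : ℝ) * ((x j : ℝ) - 1)) - ∏ j, (x j : ℝ) ^ 2) ∂(poissonPi μ)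
      = (∏ j, (μ j : ℝ)) ^ 2 * (2 * (∏ j, (μ j : ℝ)) * (∑ j, ((μ j : ℝ))⁻¹) - ∑ j, ((μ j : ℝ))⁻¹ * (1 + 2 * (μ j : ℝ)) * ∏ k ∈ univ.erase j, (1 + (μ k : ℝ))) :=
  expectation_V_X_general m μ
end

section
/- Fix integers n ≥ 1, m ≥ 2 and nonnegative integers y_{ij} (1 ≤ i ≤ n, 1 ≤ j ≤ m). Set ȳ_j = n^{-1}∑_{i=1}^n y_{ij} and assume ȳ_j > 0 for all j, and let y_i = min_{1≤j≤m} y_{ij}. For 0 ≤ λ < min_j ȳ_j define ξ(λ) = λ / ∏_{j=1}^m(ȳ_j − λ), and for a vector v = (v_1,…,v_m) of nonnegative integers define S_i(λ; v) = ∑_{u=0}^{min_j v_j} ξ(λ)^u / ( u! ∏_{j=1}^m (v_j − u)! ). Define l(λ) = n( (m−1)λ − ∑_{j=1}^m ȳ_j ) + n∑_{j=1}^m ȳ_j log(ȳ_j − λ) + ∑_{i=1}^n log S_i(λ; y_{i·}), where y_{i·} = (y_{i1},…,y_{im}). Then for every λ ∈ (0, min_j ȳ_j), l is differentiable at λ with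 l′(λ) = (1 + λ∑_{j=1}^m (ȳ_j − λ)^{-1}) · ( −n + (∏_{j=1}^m(ȳ_j − λ))^{-1} ∑_{i=1}^n [S_i(λ; y_{i·} − 1)/S_i(λ; y_{i·})]·1{y_i > 0} ), where y_{i·} − 1 = (y_{i1}−1,…,y_{im}−1) and 1{y_i > 0} is the indicator that min_j y_{ij} > 0. -/
/-!
Write `S_i(λ; v) = F_v(ξ(λ))` with the polynomial `F_v(t) = ∑_u t^u / (u! ∏_j (v_j - u)!)`
(`sharedComponentSum v`). Shifting the summation index shows `F_v' = F_{v-1}` when `min_j v_j > 0`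
and `F_v' = 0` otherwise, while `ξ'(λ) = (1 + λ ∑_j (ȳ_j - λ)⁻¹) / ∏_j (ȳ_j - λ)`; the chain rule
handles the `log S_i` terms. The two remaining terms of `l` contribute
`n(m - 1) - n(m + λ ∑_j (ȳ_j - λ)⁻¹) = -n (1 + λ ∑_j (ȳ_j - λ)⁻¹)`, so the common factor
`1 + λ ∑_j (ȳ_j - λ)⁻¹` comes out.
-/

open Finset

theorem Nat.iInf_sub {ι : Sort*} (v : ι → ℕ) (k : ℕ) : ⨅ j, (v j - k) = (⨅ j, v j) - k := by
  rcases isEmpty_or_nonempty ι with hι | hι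
  · simp
  obtain ⟨j₀, hj₀⟩ := ciInf_mem v
  refine le_antisymm (hj₀ ▸ ciInf_le (OrderBot.bddBelow _) j₀) (le_ciInf fun j => ?_)
  exact Nat.sub_le_sub_right (ciInf_le (OrderBot.bddBelow _) j) k

section SharedComponentSum

variable {ι : Type*} [Fintype ι]

open Nat

noncomputable def sharedComponentSum (v : ι → ℕ) (t : ℝ) : ℝ :=
  ∑ u ∈ range ((⨅ j, v j) + 1), t ^ u / ((u ! : ℝ) * ∏ j, ((v j - u)! : ℝ))

theorem sharedComponentSum_pos (v : ι → ℕ) {t : ℝ} (ht : 0 ≤ t) :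
    0 < sharedComponentSum v t := by
  exact sum_pos' (fun u _ => by positivity) ⟨0, by simp, by positivity⟩

theorem hasDerivAt_sharedComponentSum (v : ι → ℕ) (t : ℝ) :
    HasDerivAt (sharedComponentSum v)
      (if 0 < ⨅ j, v j then sharedComponentSum (fun j => v j - 1) t else 0) t := by
  refine (HasDerivAt.fun_sum fun u _ => (hasDerivAt_pow u t).div_const _).congr_deriv ?_
  rw [sum_range_succ']
  split_ifs with hv
  · obtain ⟨M, hM⟩ := Nat.exists_eq_add_one_of_ne_zero hv.ne'
    rw [sharedComponentSum, Nat.iInf_sub, hM]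
    simp only [Nat.add_sub_cancel, CharP.cast_eq_zero, zero_mul, zero_div, add_zero]
    refine sum_congr rfl fun u _ => ?_
    have hsub : ∀ j, v j - (u + 1) = v j - 1 - u := fun j => by omega
    simp only [hsub, factorial_succ, cast_mul, cast_add, cast_one]
    field_simp
  · simp [Nat.eq_zero_of_not_pos hv]

end SharedComponentSum

section ProdConstSub

variable {ι : Type*} (s : Finset ι) (c : ι → ℝ) {x : ℝ}

theorem hasDerivAt_prod_const_sub (hx : ∀ j ∈ s, c j - x ≠ 0) :
    HasDerivAt (fun x => ∏ j ∈ s, (c j - x)) (-(∏ j ∈ s, (c j - x)) * ∑ j ∈ s, (c j - x)⁻¹) x := by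
  classical
  refine (HasDerivAt.fun_finsetProd fun j _ => (hasDerivAt_id' x).const_sub (c j)).congr_deriv ?_
  rw [neg_mul, mul_sum, ← sum_neg_distrib]
  refine sum_congr rfl fun j hj => ?_
  rw [smul_eq_mul, mul_neg_one, ← mul_prod_erase s (fun k => c k - x) hj]
  field_simp [hx j hj]

theorem hasDerivAt_div_prod_const_sub (hx : ∀ j ∈ s, c j - x ≠ 0) :
    HasDerivAt (fun x => x / ∏ j ∈ s, (c j - x))
      ((1 + x * ∑ j ∈ s, (c j - x)⁻¹) / ∏ j ∈ s, (c j - x)) x := by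
  have hP : ∏ j ∈ s, (c j - x) ≠ 0 := prod_ne_zero_iff.2 hx
  refine ((hasDerivAt_id' x).div (hasDerivAt_prod_const_sub s c hx) hP).congr_deriv ?_
  field_simp
  ring

theorem hasDerivAt_sum_mul_log_const_sub (hx : ∀ j ∈ s, c j - x ≠ 0) :
    HasDerivAt (fun x => ∑ j ∈ s, c j * Real.log (c j - x))
      (-(#s + x * ∑ j ∈ s, (c j - x)⁻¹)) x := by
  refine (HasDerivAt.fun_sum fun j hj =>
    (((hasDerivAt_id' x).const_sub (c j)).log (hx j hj)).const_mul (c j)).congr_deriv ?_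
  rw [card_eq_sum_ones, Nat.cast_sum, mul_sum, ← sum_add_distrib, ← sum_neg_distrib]
  refine sum_congr rfl fun j hj => ?_
  field_simp [hx j hj]
  ring

end ProdConstSub

theorem loglik_hasDerivAt_general (n m : ℕ)
    (y : Fin n → Fin m → ℕ)
    (ybar : Fin m → ℝ)
    (ξ : ℝ → ℝ) (hξ : ∀ lam, ξ lam = lam / ∏ j, (ybar j - lam))
    (S : ℝ → (Fin m → ℕ) → ℝ)
    (hS : ∀ lam (v : Fin m → ℕ), S lam v = ∑ u ∈ Finset.range ((⨅ j, v j) + 1),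
        ξ lam ^ u / ((u.factorial : ℝ) * ∏ j, ((v j - u).factorial : ℝ)))
    (l : ℝ → ℝ)
    (hl : ∀ lam, l lam = (n : ℝ) * (((m : ℝ) - 1) * lam - ∑ j, ybar j)
        + (n : ℝ) * ∑ j, ybar j * Real.log (ybar j - lam)
        + ∑ i, Real.log (S lam (y i))) :
    ∀ lam ∈ Set.Ioo (0 : ℝ) (⨅ j, ybar j),
      HasDerivAt l
        ((1 + lam * ∑ j, (ybar j - lam)⁻¹) *
          (-(n : ℝ) + (∏ j, (ybar j - lam))⁻¹ *
            ∑ i, if 0 < ⨅ j, y i j then S lam (fun j => y i j - 1) / S lam (y i) else 0))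
        lam := by
  rintro lam ⟨hlam₀, hlam⟩
  have hsub : ∀ j ∈ univ, 0 < ybar j - lam := fun j _ =>
    sub_pos.2 (hlam.trans_le (ciInf_le (Set.finite_range ybar).bddBelow j))
  have hsub' : ∀ j ∈ univ, ybar j - lam ≠ 0 := fun j hj => (hsub j hj).ne'
  have hξ' : HasDerivAt ξ ((1 + lam * ∑ j, (ybar j - lam)⁻¹) / ∏ j, (ybar j - lam)) lam := by
    rw [funext hξ]
    exact hasDerivAt_div_prod_const_sub univ ybar hsub'
  have hξ₀ : 0 ≤ ξ lam := hξ lam ▸ div_nonneg hlam₀.le (prod_nonneg fun j hj => (hsub j hj).le)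
  obtain rfl : S = fun x v => sharedComponentSum v (ξ x) := funext₂ hS
  have hlogS : ∀ i, HasDerivAt (fun x => Real.log (sharedComponentSum (y i) (ξ x)))
      ((1 + lam * ∑ j, (ybar j - lam)⁻¹) * ((∏ j, (ybar j - lam))⁻¹ *
        if 0 < ⨅ j, y i j then sharedComponentSum (fun j => y i j - 1) (ξ lam) /
          sharedComponentSum (y i) (ξ lam) else 0)) lam := fun i =>
    (((hasDerivAt_sharedComponentSum (y i) (ξ lam)).comp lam hξ').log
      (sharedComponentSum_pos _ hξ₀).ne').congr_deriv <| by
      rw [Function.comp_apply]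
      split_ifs
      · field_simp
      · simp
  rw [funext hl]
  refine ((((hasDerivAt_id' lam).const_mul _).sub_const _).const_mul _
    |>.add ((hasDerivAt_sum_mul_log_const_sub univ ybar hsub').const_mul _)
    |>.add (HasDerivAt.fun_sum fun i _ => hlogS i)).congr_deriv ?_
  simp only [card_univ, Fintype.card_fin, ← mul_sum]
  ring

/-- Derivative of the profile log-likelihood `l(λ)` of the dependent Poisson model.
Here `ybar j` is the `j`-th sample mean, `ξ` is as in the paper, `S lam v` is the
truncated sum `S_i(λ; v)` (the sum running up to `min_j v_j`), and `l` is the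
log-likelihood.  For every `λ ∈ (0, min_j ȳ_j)`, `l` is differentiable at `λ` with
the stated derivative. -/
theorem loglik_hasDerivAt (n m : ℕ) (hn : 1 ≤ n) (hm : 2 ≤ m)
    (y : Fin n → Fin m → ℕ)
    (ybar : Fin m → ℝ) (hybar : ybar = fun j => (n : ℝ)⁻¹ * ∑ i, (y i j : ℝ))
    (hpos : ∀ j, 0 < ybar j)
    (ξ : ℝ → ℝ) (hξ : ∀ lam, ξ lam = lam / ∏ j, (ybar j - lam))
    (S : ℝ → (Fin m → ℕ) → ℝ)
    (hS : ∀ lam (v : Fin m → ℕ), S lam v = ∑ u ∈ Finset.range ((⨅ j, v j) + 1),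
        ξ lam ^ u / ((u.factorial : ℝ) * ∏ j, ((v j - u).factorial : ℝ)))
    (l : ℝ → ℝ)
    (hl : ∀ lam, l lam = (n : ℝ) * (((m : ℝ) - 1) * lam - ∑ j, ybar j)
        + (n : ℝ) * ∑ j, ybar j * Real.log (ybar j - lam)
        + ∑ i, Real.log (S lam (y i))) :
    ∀ lam ∈ Set.Ioo (0 : ℝ) (⨅ j, ybar j),
      HasDerivAt l
        ((1 + lam * ∑ j, (ybar j - lam)⁻¹) *
          (-(n : ℝ) + (∏ j, (ybar j - lam))⁻¹ *
            ∑ i, if 0 < ⨅ j, y i j then S lam (fun j => y i j - 1) / S lam (y i) else 0))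
        lam :=
  loglik_hasDerivAt_general n m y ybar ξ hξ S hS l hl
end
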